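/- Let B : X → X be a bounded linear operator and let x ∈ ℓ^∞(X) be a bounded sequence satisfying x_{n+1} = B x_n + y_n for all n ≥ 0, where (y_n) is a sequence converging to 0 in X. Then S̄ x̄ = B̄ x̄ in Y, and the spectrum σ(x) of the sequence x is contained in σ(B) ∩ ∂D. -/

import Mathlib

set_option linter.unusedSectionVars false

open Filter Topology
open scoped ENNReal

noncomputable section

variable (X : Type*) [NormedAddCommGroup X] [NormedSpace ℂ X] [CompleteSpace X]

/-- `ℓ^∞(X)`: the Banach space of bounded sequences in `X` with the sup norm. -/
abbrev Linf : Type _ := ↥(lp (fun _ : ℕ => X) ∞)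

/-- `c₀(X)`: the subspace of `ℓ^∞(X)` of sequences converging to `0`. -/
def czero : Submodule ℂ (Linf X) where
  carrier := {f | Tendsto (fun n => f n) atTop (𝓝 (0 : X))}
  add_mem' := by
    intro f g hf hg
    simpa [lp.coeFn_add] using hf.add hg
  zero_mem' := by
    simp [lp.coeFn_zero]
  smul_mem' := by
    intro c f hf
    simpa [lp.coeFn_smul] using hf.const_smul c

instance : IsClosed ((czero X : Set (Linf X))) := by
  rw [← isSeqClosed_iff_isClosed]
  intro F f hF hFf
  show Tendsto (fun n => f n) atTop (𝓝 (0 : X))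
  rw [Metric.tendsto_atTop]
  intro ε hε
  obtain ⟨k, hk⟩ := (Metric.tendsto_atTop.mp hFf (ε / 2) (by linarith)).imp
    (fun k h => h k le_rfl)
  have hFk : Tendsto (fun n => (F k) n) atTop (𝓝 (0 : X)) := hF k
  obtain ⟨N, hN⟩ := Metric.tendsto_atTop.mp hFk (ε / 2) (by linarith)
  refine ⟨N, fun n hn => ?_⟩
  have h1 : ‖f n - (F k) n‖ ≤ ‖f - F k‖ := by
    have := lp.norm_apply_le_norm (ENNReal.top_ne_zero) (f - F k) n
    simpa [lp.coeFn_sub] using this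
  have h2 : ‖f - F k‖ < ε / 2 := by
    rw [← dist_eq_norm] at *
    rw [dist_comm]
    exact hk
  have h3 : ‖(F k) n‖ < ε / 2 := by simpa [dist_eq_norm] using hN n hn
  have : ‖f n‖ ≤ ‖f n - (F k) n‖ + ‖(F k) n‖ := by
    calc ‖f n‖ = ‖(f n - (F k) n) + (F k) n‖ := by rw [sub_add_cancel]
      _ ≤ ‖f n - (F k) n‖ + ‖(F k) n‖ := norm_add_le _ _
  · simp only [dist_eq_norm, sub_zero]
    calc ‖f n‖ ≤ ‖f n - (F k) n‖ + ‖(F k) n‖ := this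
      _ < ε / 2 + ε / 2 := by exact add_lt_add (lt_of_le_of_lt h1 h2) h3
      _ = ε := by ring

/-- The quotient space `Y = ℓ^∞(X)/c₀(X)`. -/
abbrev YY := (Linf X) ⧸ (czero X)

/-- The shift, as a map of bounded sequences. -/
def shiftFun (f : Linf X) : Linf X :=
  ⟨fun n => f (n + 1), memℓp_infty ⟨‖f‖, by
    rintro r ⟨n, rfl⟩
    exact lp.norm_apply_le_norm ENNReal.top_ne_zero f (n + 1)⟩⟩

@[simp] lemma shiftFun_apply (f : Linf X) (n : ℕ) : (shiftFun X f) n = f (n + 1) := rfl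

/-- The shift operator `S` on `ℓ^∞(X)`, `(Sx)ₙ = x_{n+1}`. -/
def shiftL : Linf X →L[ℂ] Linf X :=
  LinearMap.mkContinuous
    { toFun := shiftFun X
      map_add' := fun _ _ => rfl
      map_smul' := fun _ _ => rfl }
    1
    (fun f => by
      simp only [one_mul, LinearMap.coe_mk, AddHom.coe_mk]
      exact lp.norm_le_of_forall_le (norm_nonneg f)
        (fun n => lp.norm_apply_le_norm ENNReal.top_ne_zero f (n + 1)))

@[simp] lemma shiftL_apply (f : Linf X) (n : ℕ) : (shiftL X f) n = f (n + 1) := rfl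

lemma shift_mem_czero {f : Linf X} (hf : f ∈ czero X) : shiftL X f ∈ czero X := by
  have : Tendsto (fun n => f (n + 1)) atTop (𝓝 (0 : X)) :=
    hf.comp (tendsto_add_atTop_nat 1)
  show Tendsto (fun n => (shiftL X f) n) atTop (𝓝 (0 : X))
  simpa [czero, Set.mem_setOf_eq] using this

/-- The reduced shift operator `S̄` on `Y = ℓ^∞(X)/c₀(X)`, as a linear map. -/
def SbarLin : YY X →ₗ[ℂ] YY X :=
  Submodule.liftQ (czero X) ((czero X).mkQ.comp (shiftL X).toLinearMap)
    (by
      intro f hf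
      simp only [LinearMap.mem_ker, LinearMap.comp_apply, Submodule.mkQ_apply,
        ContinuousLinearMap.coe_coe, Submodule.Quotient.mk_eq_zero]
      exact shift_mem_czero X hf)

lemma SbarLin_mk (f : Linf X) :
    SbarLin X (Submodule.Quotient.mk f) = Submodule.Quotient.mk (shiftL X f) := rfl

/-- The reduced shift operator `S̄` on `Y = ℓ^∞(X)/c₀(X)`. -/
def Sbar : YY X →L[ℂ] YY X :=
  (SbarLin X).mkContinuous 1 (by
    intro y
    rw [one_mul]
    refine le_of_forall_pos_le_add (fun ε hε => ?_)
    obtain ⟨m, rfl, hm⟩ := Submodule.Quotient.norm_mk_lt y hε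
    rw [SbarLin_mk]
    calc ‖(Submodule.Quotient.mk (shiftL X m) : YY X)‖ ≤ ‖shiftL X m‖ :=
          Submodule.Quotient.norm_mk_le _ _
      _ ≤ ‖m‖ := lp.norm_le_of_forall_le (norm_nonneg m)
            (fun n => lp.norm_apply_le_norm ENNReal.top_ne_zero m (n + 1))
      _ ≤ ‖(Submodule.Quotient.mk m : YY X)‖ + ε := hm.le)

lemma Sbar_mk (f : Linf X) :
    Sbar X (Submodule.Quotient.mk f) = Submodule.Quotient.mk (shiftL X f) := rfl

/-- The function `g(λ) = R(λ, S̄) x̄ = (λ - S̄)⁻¹ x̄`. -/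
def gfun (x : Linf X) (z : ℂ) : YY X :=
  (resolvent (Sbar X) z) (Submodule.Quotient.mk x)

/-- The spectrum `σ(x)` of a bounded sequence `x`: the set of points `z₀ ∈ ℂ` such that the
holomorphic function `g(λ) = R(λ, S̄) x̄` (defined for `|λ| ≠ 1`) admits no holomorphic extension
to a neighborhood of `z₀`. -/
def seqSpectrum (x : Linf X) : Set ℂ :=
  {z₀ : ℂ | ¬ ∃ (U : Set ℂ) (h : ℂ → YY X), IsOpen U ∧ z₀ ∈ U ∧ AnalyticOnNhd ℂ h U ∧
      ∀ z ∈ U, ‖z‖ ≠ 1 → h z = gfun X x z}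

/-- The extension of an operator `B` on `X` to `ℓ^∞(X)`, acting coordinatewise. -/
def BextFun (B : X →L[ℂ] X) (f : Linf X) : Linf X :=
  ⟨fun n => B (f n), memℓp_infty ⟨‖B‖ * ‖f‖, by
    rintro r ⟨n, rfl⟩
    exact (B.le_opNorm _).trans
      (mul_le_mul_of_nonneg_left (lp.norm_apply_le_norm ENNReal.top_ne_zero f n)
        (norm_nonneg B))⟩⟩

@[simp] lemma BextFun_apply (B : X →L[ℂ] X) (f : Linf X) (n : ℕ) :
    (BextFun X B f) n = B (f n) := rfl

/-- The extension of `B` to `ℓ^∞(X)` as a bounded operator, `(Bx)ₙ = B xₙ`. -/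
def Bext (B : X →L[ℂ] X) : Linf X →L[ℂ] Linf X :=
  LinearMap.mkContinuous
    { toFun := BextFun X B
      map_add' := by
        intro f g
        apply Subtype.ext
        funext n
        show B ((f + g) n) = B (f n) + B (g n)
        have : (f + g) n = f n + g n := by rw [lp.coeFn_add]; rfl
        rw [this, map_add]
      map_smul' := by
        intro c f
        apply Subtype.ext
        funext n
        show B ((c • f) n) = c • B (f n)
        have : (c • f) n = c • f n := by rw [lp.coeFn_smul]; rfl
        rw [this, map_smul] }
    ‖B‖
    (fun f => by
      simp only [LinearMap.coe_mk, AddHom.coe_mk]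
      refine lp.norm_le_of_forall_le (mul_nonneg (norm_nonneg B) (norm_nonneg f)) fun n => ?_
      exact (B.le_opNorm _).trans
        (mul_le_mul_of_nonneg_left (lp.norm_apply_le_norm ENNReal.top_ne_zero f n)
          (norm_nonneg B)))

@[simp] lemma Bext_apply (B : X →L[ℂ] X) (f : Linf X) (n : ℕ) :
    (Bext X B f) n = B (f n) := rfl

lemma Bext_mem_czero (B : X →L[ℂ] X) {f : Linf X} (hf : f ∈ czero X) :
    Bext X B f ∈ czero X := by
  have hf' : Tendsto (fun n => f n) atTop (𝓝 (0 : X)) := hf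
  have : Tendsto (fun n => B (f n)) atTop (𝓝 (B (0 : X))) :=
    (B.continuous.tendsto 0).comp hf'
  show Tendsto (fun n => (Bext X B f) n) atTop (𝓝 (0 : X))
  simpa [czero, Set.mem_setOf_eq, map_zero] using this

/-- The operator induced by `B` on the quotient `Y = ℓ^∞(X)/c₀(X)`, as a linear map. -/
def BbarLin (B : X →L[ℂ] X) : YY X →ₗ[ℂ] YY X :=
  Submodule.liftQ (czero X) ((czero X).mkQ.comp (Bext X B).toLinearMap)
    (by
      intro f hf
      simp only [LinearMap.mem_ker, LinearMap.comp_apply, Submodule.mkQ_apply,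
        ContinuousLinearMap.coe_coe, Submodule.Quotient.mk_eq_zero]
      exact Bext_mem_czero X B hf)

lemma BbarLin_mk (B : X →L[ℂ] X) (f : Linf X) :
    BbarLin X B (Submodule.Quotient.mk f) = Submodule.Quotient.mk (Bext X B f) := rfl

/-- The operator induced by `B` on the quotient `Y = ℓ^∞(X)/c₀(X)`. -/
def Bbar (B : X →L[ℂ] X) : YY X →L[ℂ] YY X :=
  (BbarLin X B).mkContinuous ‖B‖ (by
    intro y
    refine le_of_forall_pos_le_add (fun ε hε => ?_)
    have hδ : 0 < ε / (‖B‖ + 1) := by positivity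
    obtain ⟨m, rfl, hm⟩ := Submodule.Quotient.norm_mk_lt y hδ
    rw [BbarLin_mk]
    have hB : (0:ℝ) ≤ ‖B‖ := norm_nonneg B
    have h0 : ‖Bext X B m‖ ≤ ‖B‖ * ‖m‖ :=
      lp.norm_le_of_forall_le (mul_nonneg hB (norm_nonneg m)) fun n =>
        (B.le_opNorm _).trans
          (mul_le_mul_of_nonneg_left (lp.norm_apply_le_norm ENNReal.top_ne_zero m n) hB)
    have h1 : ‖(Submodule.Quotient.mk (Bext X B m) : YY X)‖ ≤ ‖B‖ * ‖m‖ :=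
      (Submodule.Quotient.norm_mk_le _ _).trans h0
    have h2 : ‖B‖ * ‖m‖ ≤ ‖B‖ * (‖(Submodule.Quotient.mk m : YY X)‖ + ε / (‖B‖ + 1)) :=
      mul_le_mul_of_nonneg_left hm.le hB
    have hp : (0:ℝ) < ‖B‖ + 1 := by positivity
    have h3 : ‖B‖ * (ε / (‖B‖ + 1)) ≤ ε := by
      rw [mul_div_assoc', div_le_iff₀ hp]
      nlinarith
    have h4 : ‖B‖ * (‖(Submodule.Quotient.mk m : YY X)‖ + ε / (‖B‖ + 1))
        = ‖B‖ * ‖(Submodule.Quotient.mk m : YY X)‖ + ‖B‖ * (ε / (‖B‖ + 1)) := mul_add _ _ _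
    linarith)

lemma Bbar_mk (B : X →L[ℂ] X) (f : Linf X) :
    Bbar X B (Submodule.Quotient.mk f) = Submodule.Quotient.mk (Bext X B f) := rfl


/-! Modulo `c₀(X)` the recurrence says `S̄ x̄ = B̄ x̄`. Since `S̄` and `B̄` commute, the second
resolvent identity gives `R(λ, S̄) x̄ = R(λ, B̄) x̄` wherever both resolvents exist, and `B ↦ B̄` is
an algebra homomorphism, so `σ(B̄) ⊆ σ(B)`; hence `λ ↦ R(λ, B̄) x̄` extends `g` across every
`λ ∉ σ(B)`. Off the unit circle `g` is already holomorphic: `S̄` is invertible, its inverse is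
induced by the right shift, and both have norm `≤ 1`, so `σ(S̄)` lies on the unit circle. -/

section BanachAlgebra

variable {A : Type*} [NormedRing A] [NormedAlgebra ℂ A] [CompleteSpace A]

theorem analyticOnNhd_resolvent (a : A) : AnalyticOnNhd ℂ (resolvent a) (resolventSet ℂ a) :=
  DifferentiableOn.analyticOnNhd
    (fun _ hz =>
      (spectrum.hasDerivAt_resolvent_const_left hz).differentiableAt.differentiableWithinAt)
    (spectrum.isOpen_resolventSet a)

theorem norm_le_one_of_mem_spectrum (h1 : ‖(1 : A)‖ ≤ 1) {a : A} (ha : ‖a‖ ≤ 1) {z : ℂ}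
    (hz : z ∈ spectrum ℂ a) : ‖z‖ ≤ 1 := by
  have := spectrum.subset_closedBall_norm_mul a hz
  rw [mem_closedBall_zero_iff] at this
  exact this.trans (mul_le_one₀ ha (norm_nonneg _) h1)

theorem mem_resolventSet_of_norm_ne_one (h1 : ‖(1 : A)‖ ≤ 1) (u : Aˣ) (hu : ‖(u : A)‖ ≤ 1)
    (hu' : ‖(↑u⁻¹ : A)‖ ≤ 1) {z : ℂ} (hz : ‖z‖ ≠ 1) : z ∈ resolventSet ℂ (u : A) := by
  rw [spectrum.mem_resolventSet_iff, ← spectrum.notMem_iff]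
  intro hzu
  have hz0 : z ≠ 0 := by
    rintro rfl
    exact (spectrum.zero_notMem_iff ℂ).mpr u.isUnit hzu
  have hzinv : z⁻¹ ∈ spectrum ℂ (↑u⁻¹ : A) := by
    rw [← spectrum.map_inv]
    exact Set.inv_mem_inv.mpr hzu
  have hge : 1 ≤ ‖z‖ := by
    have := norm_le_one_of_mem_spectrum h1 hu' hzinv
    rwa [norm_inv, inv_le_one₀ (norm_pos_iff.mpr hz0)] at this
  exact hz (le_antisymm (norm_le_one_of_mem_spectrum h1 hu hzu) hge)

end BanachAlgebra

section Operators

variable {E : Type*} [NormedAddCommGroup E] [NormedSpace ℂ E] [CompleteSpace E]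

theorem analyticOnNhd_resolvent_apply (a : E →L[ℂ] E) (v : E) :
    AnalyticOnNhd ℂ (fun z => resolvent a z v) (resolventSet ℂ a) :=
  ((ContinuousLinearMap.apply ℂ E v).analyticOnNhd _).comp (analyticOnNhd_resolvent a)
    (Set.mapsTo_univ _ _)

theorem resolvent_apply_eq_of_apply_eq {a b : E →L[ℂ] E} (hab : Commute a b) {v : E}
    (hv : a v = b v) {z : ℂ} (ha : z ∈ resolventSet ℂ a) (hb : z ∈ resolventSet ℂ b) :
    resolvent a z v = resolvent b z v := by
  have hcomm : Commute (a - b) (resolvent b z) := by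
    rw [spectrum.resolvent_eq hb]
    refine Commute.units_inv_right ?_
    rw [hb.unit_spec]
    exact ((Algebra.commute_algebraMap_right z a).sub_left
      (Algebra.commute_algebraMap_right z b)).sub_right (hab.sub_left (Commute.refl b))
  have hres := congr($(spectrum.resolvent_sub_resolvent ha hb) v)
  rw [mul_assoc, hcomm.eq] at hres
  simpa [sub_eq_zero, hv] using hres

end Operators

section Quotient

variable {E F : Type*} [SeminormedAddCommGroup E] [NormedSpace ℂ E]
  [SeminormedAddCommGroup F] [NormedSpace ℂ F] {p : Submodule ℂ E}

theorem continuousLinearMap_qext {f g : E ⧸ p →L[ℂ] F}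
    (h : ∀ m : E, f (Submodule.Quotient.mk m) = g (Submodule.Quotient.mk m)) : f = g := by
  ext y
  obtain ⟨m, rfl⟩ := Submodule.Quotient.mk_surjective p y
  exact h m

def quotientMapL (f : E →L[ℂ] E) (hf : p ≤ p.comap (f : E →ₗ[ℂ] E)) : E ⧸ p →L[ℂ] E ⧸ p :=
  p.liftQL (p.mkQL.comp f) fun m hm => by
    simpa [Submodule.Quotient.mk_eq_zero] using hf hm

theorem norm_quotientMapL_le (f : E →L[ℂ] E) (hf : p ≤ p.comap (f : E →ₗ[ℂ] E)) :
    ‖quotientMapL f hf‖ ≤ ‖f‖ := by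
  have hbound (m : E) : ‖(Submodule.Quotient.mk (f m) : E ⧸ p)‖ ≤ ‖f‖ * ‖m‖ :=
    (Submodule.Quotient.norm_mk_le _ _).trans (f.le_opNorm m)
  let g := (p.mkQ.comp (f : E →ₗ[ℂ] E)).toAddMonoidHom.mkNormedAddGroupHom ‖f‖ hbound
  refine ContinuousLinearMap.opNorm_le_bound _ (norm_nonneg f) fun y => ?_
  calc ‖quotientMapL f hf y‖ ≤ ‖g‖ * ‖y‖ :=
        QuotientAddGroup.norm_lift_apply_le (S := p.toAddSubgroup) g
          (fun m hm => (Submodule.Quotient.mk_eq_zero p).mpr (hf hm)) y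
    _ ≤ ‖f‖ * ‖y‖ := by
        gcongr
        exact AddMonoidHom.mkNormedAddGroupHom_norm_le _ (norm_nonneg f) hbound

end Quotient

def rshiftFun (f : Linf X) (n : ℕ) : X :=
  Nat.casesOn n 0 fun m => f m

theorem norm_rshiftFun_le (f : Linf X) (n : ℕ) : ‖rshiftFun X f n‖ ≤ ‖f‖ := by
  cases n with
  | zero => simp [rshiftFun]
  | succ m => exact lp.norm_apply_le_norm ENNReal.top_ne_zero f m

def rshift : Linf X →L[ℂ] Linf X :=
  LinearMap.mkContinuous
    { toFun := fun f => ⟨rshiftFun X f, memℓp_infty ⟨‖f‖, by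
        rintro _ ⟨n, rfl⟩
        exact norm_rshiftFun_le X f n⟩⟩
      map_add' := fun f g => lp.ext <| funext fun n => by
        cases n <;> [exact (add_zero 0).symm; rfl]
      map_smul' := fun c f => lp.ext <| funext fun n => by
        cases n <;> [exact (smul_zero c).symm; rfl] }
    1 fun f => by
      simpa using lp.norm_le_of_forall_le (norm_nonneg f) (norm_rshiftFun_le X f)

@[simp] theorem rshift_apply_succ (f : Linf X) (n : ℕ) : rshift X f (n + 1) = f n := rfl

theorem rshift_mem_czero {f : Linf X} (hf : f ∈ czero X) : rshift X f ∈ czero X := by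
  refine ((tendsto_add_atTop_iff_nat 1).mp ?_ : Tendsto (fun n => rshift X f n) atTop _)
  exact hf

def Tbar : YY X →L[ℂ] YY X :=
  quotientMapL (rshift X) fun _ => rshift_mem_czero X

theorem Sbar_mul_Tbar : Sbar X * Tbar X = 1 :=
  continuousLinearMap_qext fun _ => congrArg Submodule.Quotient.mk <| lp.ext rfl

theorem Tbar_mul_Sbar : Tbar X * Sbar X = 1 :=
  continuousLinearMap_qext fun f => by
    refine (Submodule.Quotient.eq _).mpr ?_
    refine ((tendsto_add_atTop_iff_nat 1).mp ?_ : Tendsto (fun n => (_ - f : Linf X) n) atTop _)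
    simp

theorem norm_Sbar_le : ‖Sbar X‖ ≤ 1 :=
  LinearMap.mkContinuous_norm_le _ zero_le_one _

theorem norm_Tbar_le : ‖Tbar X‖ ≤ 1 :=
  (norm_quotientMapL_le _ _).trans (LinearMap.mkContinuous_norm_le _ zero_le_one _)

theorem mem_resolventSet_Sbar {z : ℂ} (hz : ‖z‖ ≠ 1) : z ∈ resolventSet ℂ (Sbar X) :=
  mem_resolventSet_of_norm_ne_one ContinuousLinearMap.norm_id_le
    ⟨Sbar X, Tbar X, Sbar_mul_Tbar X, Tbar_mul_Sbar X⟩ (norm_Sbar_le X) (norm_Tbar_le X) hz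

theorem seqSpectrum_subset_unitSphere (x : Linf X) : seqSpectrum X x ⊆ {z : ℂ | ‖z‖ = 1} :=
  fun _ hz => by_contra fun hz1 => hz ⟨{w | ‖w‖ ≠ 1}, gfun X x, isOpen_ne.preimage continuous_norm,
    hz1, (analyticOnNhd_resolvent_apply _ _).mono fun _ => mem_resolventSet_Sbar X,
    fun _ _ _ => rfl⟩

def BbarAlgHom : (X →L[ℂ] X) →ₐ[ℂ] (YY X →L[ℂ] YY X) where
  toFun := Bbar X
  map_one' := continuousLinearMap_qext fun _ => rfl
  map_mul' _ _ := continuousLinearMap_qext fun _ => rfl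
  map_zero' := continuousLinearMap_qext fun _ => rfl
  map_add' _ _ := continuousLinearMap_qext fun _ => rfl
  commutes' _ := continuousLinearMap_qext fun _ => rfl

theorem Sbar_commute_Bbar (B : X →L[ℂ] X) : Commute (Sbar X) (Bbar X B) :=
  continuousLinearMap_qext fun _ => rfl

theorem seqSpectrum_subset_spectrum {B : X →L[ℂ] X} {x : Linf X}
    (hx : Sbar X (Submodule.Quotient.mk x) = Bbar X B (Submodule.Quotient.mk x)) :
    seqSpectrum X x ⊆ spectrum ℂ B := by
  intro z hz
  by_contra hzB
  have hBbar (w : ℂ) (hw : w ∈ resolventSet ℂ B) : w ∈ resolventSet ℂ (Bbar X B) :=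
    AlgHom.mem_resolventSet_apply (BbarAlgHom X) hw
  exact hz ⟨resolventSet ℂ B, fun w => resolvent (Bbar X B) w (Submodule.Quotient.mk x),
    spectrum.isOpen_resolventSet B, Set.notMem_compl_iff.mp hzB,
    (analyticOnNhd_resolvent_apply _ _).mono hBbar,
    fun w hw hw1 => (resolvent_apply_eq_of_apply_eq (Sbar_commute_Bbar X B) hx
      (mem_resolventSet_Sbar X hw1) (hBbar w hw)).symm⟩

theorem Sbar_mk_eq_Bbar_mk_of_recurrence {B : X →L[ℂ] X} {x : Linf X} {y : ℕ → X}
    (hy : Tendsto y atTop (𝓝 0)) (hrec : ∀ n, x (n + 1) = B (x n) + y n) :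
    Sbar X (Submodule.Quotient.mk x) = Bbar X B (Submodule.Quotient.mk x) := by
  refine (Submodule.Quotient.eq _).mpr ?_
  have hdiff (n : ℕ) : (shiftL X x - Bext X B x) n = y n := by
    simp [hrec n]
  exact (funext hdiff ▸ hy : Tendsto (fun n => (shiftL X x - Bext X B x) n) atTop (𝓝 0))

/-- If a bounded sequence `x` satisfies `x_{n+1} = B x_n + y_n` with `y_n → 0`,
then `S̄ x̄ = B̄ x̄` in `Y`, and `σ(x) ⊆ σ(B) ∩ ∂𝔻`. -/
theorem seqSpectrum_subset_of_difference_equation (B : X →L[ℂ] X) (x : Linf X) (y : ℕ → X)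
    (hy : Tendsto y atTop (𝓝 (0 : X)))
    (hrec : ∀ n : ℕ, x (n + 1) = B (x n) + y n) :
    Sbar X (Submodule.Quotient.mk x) = Bbar X B (Submodule.Quotient.mk x) ∧
    seqSpectrum X x ⊆ spectrum ℂ B ∩ {lam : ℂ | ‖lam‖ = 1} := by
  have hx := Sbar_mk_eq_Bbar_mk_of_recurrence X hy hrec
  exact ⟨hx, fun _ hz =>
    ⟨seqSpectrum_subset_spectrum X hx hz, seqSpectrum_subset_unitSphere X x hz⟩⟩
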